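/- Let ω ∈ ℱ¹(ℙⁿ,e) and a ≥ 1. Under the ℂ-linear isomorphism V_a/W_a ≅ I(ω)_a induced by (h,η) ↦ h, the image of the subspace C_a := { (i_Xω, (1/e)(a·i_X dω + e·d(i_Xω))) : X = Σᵢ Xᵢ ∂/∂xᵢ with all Xᵢ ∈ S homogeneous of degree a−e+1 } (taken modulo W_a) is exactly the degree-a homogeneous component J(ω)_a of the singular ideal. Consequently there is an induced ℂ-linear isomorphism (V_a/W_a)/(image of C_a) ≅ (I(ω)/J(ω))_a, i.e., the isomorphism classes of graded projective unfoldings of degree a are computed by I(ω)/J(ω) in degree a. -/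

import Mathlib

open MvPolynomial

noncomputable section

abbrev PolyS (n : ℕ) := MvPolynomial (Fin (n+1)) ℂ

/-- The coefficient of `dω` at `dx_i ∧ dx_j`, where `ω` is the 1-form `Σ ω i dx_i`. -/
def dcoeff {n : ℕ} (ω : Fin (n+1) → PolyS n) (i j : Fin (n+1)) : PolyS n :=
  pderiv i (ω j) - pderiv j (ω i)

/-- Integrability `ω ∧ dω = 0`, written in coordinates. -/
def Integrable {n : ℕ} (ω : Fin (n+1) → PolyS n) : Prop :=
  ∀ i j k, ω i * dcoeff ω j k - ω j * dcoeff ω i k + ω k * dcoeff ω i j = 0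

/-- The singular ideal `J(ω)`, generated by the coefficients of `ω`. -/
def Jideal {n : ℕ} (ω : Fin (n+1) → PolyS n) : Ideal (PolyS n) :=
  Ideal.span (Set.range ω)

/-- The ideal `𝒞(dω)` of coefficients of `dω`. -/
def Cdiff {n : ℕ} (ω : Fin (n+1) → PolyS n) : Ideal (PolyS n) :=
  Ideal.span {g | ∃ i j, g = dcoeff ω i j}

/-- The unfoldings ideal `I(ω) = {h : h·dω = ω ∧ η for some 1-form η}`. -/
def Iideal {n : ℕ} (ω : Fin (n+1) → PolyS n) : Ideal (PolyS n) where
  carrier := {h | ∃ η : Fin (n+1) → PolyS n,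
    ∀ i j, h * dcoeff ω i j = ω i * η j - ω j * η i}
  add_mem' := by
    rintro a b ⟨η, hη⟩ ⟨ξ, hξ⟩
    exact ⟨η + ξ, fun i j => by
      simp only [Pi.add_apply]
      linear_combination hη i j + hξ i j⟩
  zero_mem' := ⟨0, fun i j => by simp⟩
  smul_mem' := by
    rintro c a ⟨η, hη⟩
    exact ⟨c • η, fun i j => by
      simp only [smul_eq_mul, Pi.smul_apply]
      linear_combination c * hη i j⟩

/-- The Kupka ideal `K(ω) = (J(ω) : 𝒞(dω))`. -/
def Kideal {n : ℕ} (ω : Fin (n+1) → PolyS n) : Ideal (PolyS n) :=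
  (Jideal ω).colon (Cdiff ω)

/-- The non-Kupka ideal `L(ω) = (J(ω) : K(ω)^∞)`. -/
def Lideal {n : ℕ} (ω : Fin (n+1) → PolyS n) : Ideal (PolyS n) :=
  ⨆ d : ℕ, (Jideal ω).colon (((Kideal ω) ^ (d+1) : Ideal (PolyS n)) : Set (PolyS n))

/-- The irrelevant ideal `(x_0, …, x_n)`. -/
def irrelevant (n : ℕ) : Ideal (PolyS n) := Ideal.span (Set.range X)

/-- `height I ≥ k` : every prime containing `I` has height at least `k`. -/
def heightGE {n : ℕ} (I : Ideal (PolyS n)) (k : ℕ) : Prop :=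
  ∀ p : PrimeSpectrum (PolyS n), I ≤ p.asIdeal → (k : ℕ∞) ≤ Order.height p

/-- `ω ∈ ℱ¹(ℙⁿ, e)` : a foliation one-form of degree `e` on `ℙⁿ`. -/
def IsFoliation (n e : ℕ) (ω : Fin (n+1) → PolyS n) : Prop :=
  ω ≠ 0 ∧ 2 ≤ e ∧ (∀ i, (ω i).IsHomogeneous (e-1)) ∧ Integrable ω ∧
  (∑ i, X i * ω i = 0) ∧ heightGE (Jideal ω) 2

/-- A homogeneous ideal: stable under taking homogeneous components. -/
def IsHomogIdeal {n : ℕ} (p : Ideal (PolyS n)) : Prop :=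
  ∀ h ∈ p, ∀ d : ℕ, homogeneousComponent d h ∈ p

/-- A relevant prime: a homogeneous prime different from the irrelevant ideal. -/
def IsRelevantPrime {n : ℕ} (p : Ideal (PolyS n)) : Prop :=
  p.IsPrime ∧ IsHomogIdeal p ∧ p ≠ irrelevant n

/-- A relevant prime `p` is a division point of `ω` iff `I(ω) ⊄ p`. -/
def DivisionPoint {n : ℕ} (ω : Fin (n+1) → PolyS n) (p : Ideal (PolyS n)) : Prop :=
  ¬ (Iideal ω ≤ p)

/-- The class `𝒰`. -/
def InU {n : ℕ} (ω : Fin (n+1) → PolyS n) : Prop :=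
  ∀ p : Ideal (PolyS n), IsRelevantPrime p → ¬ (Kideal ω ≤ p) → DivisionPoint ω p

/-- The space `V_a` of graded unfolding data of degree `a`:
pairs `(h, η)` with `h` homogeneous of degree `a`, the coefficients of `η` homogeneous
of degree `a-1`, and `a·h·dω = e·ω ∧ (η − dh)`. -/
def Vsub {n : ℕ} (ω : Fin (n+1) → PolyS n) (e a : ℕ) :
    Submodule ℂ (PolyS n × (Fin (n+1) → PolyS n)) where
  carrier := {p | p.1.IsHomogeneous a ∧ (∀ i, (p.2 i).IsHomogeneous (a-1)) ∧
    ∀ i j, (a : PolyS n) * p.1 * dcoeff ω i j =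
      (e : PolyS n) * (ω i * (p.2 j - pderiv j p.1) - ω j * (p.2 i - pderiv i p.1))}
  add_mem' := by
    rintro ⟨h₁, η₁⟩ ⟨h₂, η₂⟩ ⟨hh₁, hη₁, heq₁⟩ ⟨hh₂, hη₂, heq₂⟩
    refine ⟨hh₁.add hh₂, fun i => (hη₁ i).add (hη₂ i), fun i j => ?_⟩
    simp only [Prod.fst_add, Prod.snd_add, Pi.add_apply, map_add]
    linear_combination heq₁ i j + heq₂ i j
  zero_mem' := by
    refine ⟨isHomogeneous_zero _ _ _, fun i => isHomogeneous_zero _ _ _, fun i j => by simp⟩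
  smul_mem' := by
    rintro c ⟨h, η⟩ ⟨hh, hη, heq⟩
    refine ⟨?_, fun i => ?_, fun i j => ?_⟩
    · exact (mem_homogeneousSubmodule _ _).1
        ((homogeneousSubmodule (Fin (n+1)) ℂ a).smul_mem c
          ((mem_homogeneousSubmodule _ _).2 hh))
    · exact (mem_homogeneousSubmodule _ _).1
        ((homogeneousSubmodule (Fin (n+1)) ℂ (a-1)).smul_mem c
          ((mem_homogeneousSubmodule _ _).2 (hη i)))
    · simp only [Prod.smul_fst, Prod.smul_snd, Pi.smul_apply, map_smul]
      simp only [MvPolynomial.smul_eq_C_mul, pderiv_C_mul]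
      linear_combination (C c : PolyS n) * heq i j

/-- The subspace `W_a = {(0, f·ω) : f homogeneous of degree a-e}` (with `f = 0` forced
when `a < e`, since then there is no nonzero homogeneous polynomial of degree `a-e`). -/
def Wsub {n : ℕ} (ω : Fin (n+1) → PolyS n) (e a : ℕ) :
    Submodule ℂ (PolyS n × (Fin (n+1) → PolyS n)) where
  carrier := {p | ∃ f : PolyS n, p = (0, f • ω) ∧
    ((e ≤ a ∧ f.IsHomogeneous (a - e)) ∨ f = 0)}
  add_mem' := by
    rintro p q ⟨f, rfl, hf⟩ ⟨g, rfl, hg⟩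
    refine ⟨f + g, by rw [Prod.mk_add_mk, add_zero, add_smul], ?_⟩
    rcases hf with ⟨hea, hf⟩ | rfl
    · rcases hg with ⟨-, hg⟩ | rfl
      · exact Or.inl ⟨hea, hf.add hg⟩
      · simpa using Or.inl ⟨hea, hf⟩
    · simpa using hg
  zero_mem' := ⟨0, by rw [zero_smul]; rfl, Or.inr rfl⟩
  smul_mem' := by
    rintro c p ⟨f, rfl, hf⟩
    refine ⟨c • f, by rw [Prod.smul_mk, smul_zero, smul_assoc], ?_⟩
    rcases hf with ⟨hea, hf⟩ | rfl
    · exact Or.inl ⟨hea, (mem_homogeneousSubmodule _ _).1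
        ((homogeneousSubmodule (Fin (n+1)) ℂ (a-e)).smul_mem c
          ((mem_homogeneousSubmodule _ _).2 hf))⟩
    · exact Or.inr (by simp)


/-- The degree-`d` homogeneous component of an ideal `A ⊆ S`, as a `ℂ`-subspace of `S`. -/
def homogComp {n : ℕ} (A : Ideal (PolyS n)) (d : ℕ) : Submodule ℂ (PolyS n) :=
  (Submodule.restrictScalars ℂ A) ⊓ (homogeneousSubmodule (Fin (n+1)) ℂ d)

/-- The subspace `C_a` of trivial unfolding data of degree `a`, coming from vector fields:
pairs `(i_X ω, (1/e)(a·i_X dω + e·d(i_X ω)))` with `X` a homogeneous vector field of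
degree `a - e + 1`. -/
def Csub {n : ℕ} (ω : Fin (n+1) → PolyS n) (e a : ℕ) :
    Submodule ℂ (PolyS n × (Fin (n+1) → PolyS n)) where
  carrier := {p | ∃ Xv : Fin (n+1) → PolyS n,
    ((e ≤ a + 1 ∧ ∀ i, (Xv i).IsHomogeneous (a + 1 - e)) ∨ Xv = 0) ∧
    p = (∑ i, Xv i * ω i,
      fun j => (e : ℂ)⁻¹ • ((a : PolyS n) * (∑ i, Xv i * dcoeff ω i j) +
        (e : PolyS n) * pderiv j (∑ i, Xv i * ω i)))}
  add_mem' := by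
    rintro p q ⟨Xv, hX, rfl⟩ ⟨Yv, hY, rfl⟩
    have hsum : ∀ (Z W g : Fin (n+1) → PolyS n),
        ∑ i, (Z i + W i) * g i = (∑ i, Z i * g i) + ∑ i, W i * g i := by
      intro Z W g
      rw [← Finset.sum_add_distrib]
      exact Finset.sum_congr rfl fun i _ => add_mul _ _ _
    refine ⟨Xv + Yv, ?_, ?_⟩
    · rcases hX with ⟨hea, hX⟩ | rfl
      · rcases hY with ⟨-, hY⟩ | rfl
        · exact Or.inl ⟨hea, fun i => (hX i).add (hY i)⟩
        · exact Or.inl ⟨hea, by simpa using hX⟩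
      · simpa using hY
    · refine Prod.ext ?_ ?_
      · simp only [Prod.fst_add, Pi.add_apply]
        exact (hsum Xv Yv ω).symm
      · funext j
        simp only [Prod.snd_add, Pi.add_apply]
        rw [hsum Xv Yv (fun i => dcoeff ω i j), hsum Xv Yv ω, map_add, ← smul_add]
        congr 1
        ring
  zero_mem' := by
    refine ⟨0, Or.inr rfl, ?_⟩
    refine Prod.ext (by simp) ?_
    funext j
    simp
  smul_mem' := by
    rintro c p ⟨Xv, hX, rfl⟩
    refine ⟨c • Xv, ?_, ?_⟩
    · rcases hX with ⟨hea, hX⟩ | rfl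
      · refine Or.inl ⟨hea, fun i => ?_⟩
        exact (mem_homogeneousSubmodule _ _).1
          ((homogeneousSubmodule (Fin (n+1)) ℂ (a+1-e)).smul_mem c
            ((mem_homogeneousSubmodule _ _).2 (hX i)))
      · exact Or.inr (smul_zero c)
    · have hS : ∀ g : Fin (n+1) → PolyS n,
          ∑ i, (c • Xv i) * g i = c • ∑ i, Xv i * g i := by
        intro g
        rw [Finset.smul_sum]
        exact Finset.sum_congr rfl fun i _ => smul_mul_assoc c (Xv i) (g i)
      refine Prod.ext ?_ ?_
      · simp only [Prod.smul_fst]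
        exact (hS ω).symm
      · funext j
        simp only [Prod.smul_snd, Pi.smul_apply]
        rw [hS (fun i => dcoeff ω i j), hS ω]
        have hd : (pderiv j) (c • ∑ i, Xv i * ω i) =
            c • (pderiv j) (∑ i, Xv i * ω i) := by
          rw [MvPolynomial.smul_eq_C_mul, pderiv_C_mul, ← MvPolynomial.smul_eq_C_mul]
        rw [hd, mul_smul_comm, mul_smul_comm, ← smul_add, smul_comm]


/-! An element of `C_a` has first component `i_X ω`, which lies in `J(ω)_a`. Conversely a
degree-`a` element of `J(ω)` is `i_X ω` for a vector field `X` homogeneous of degree `a + 1 - e`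
(take homogeneous components of the coefficients), and contracting `ω ∧ dω = 0` with `X` gives
`i_X ω · dω = ω ∧ i_X dω`, which is exactly the condition for the pair built from `X` to lie
in `V_a`. Since `f` carries the image of `C_a` onto `J(ω)_a`, it descends to the quotients. -/

section Homogeneous

variable {σ R ι : Type*} [CommSemiring R]

attribute [local instance] MvPolynomial.gradedAlgebra

theorem homogeneousComponent_mul_of_isHomogeneous_of_le {g φ : MvPolynomial σ R} {m d : ℕ}
    (hφ : φ.IsHomogeneous m) (hmd : m ≤ d) :
    homogeneousComponent d (g * φ) = homogeneousComponent (d - m) g * φ := by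
  simpa [← decomposition.decompose'_apply] using
    DirectSum.coe_decompose_mul_of_right_mem_of_le (homogeneousSubmodule σ R) (a := g) hφ hmd

theorem homogeneousComponent_mul_of_isHomogeneous_of_lt {g φ : MvPolynomial σ R} {m d : ℕ}
    (hφ : φ.IsHomogeneous m) (hdm : d < m) :
    homogeneousComponent d (g * φ) = 0 := by
  simpa [← decomposition.decompose'_apply] using
    DirectSum.coe_decompose_mul_of_right_mem_of_not_le (homogeneousSubmodule σ R) (a := g) hφ
      hdm.not_ge

variable [Fintype ι] {ω : ι → MvPolynomial σ R} {x : MvPolynomial σ R} {m d : ℕ}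

theorem exists_sum_mul_eq_of_mem_span_of_isHomogeneous (hω : ∀ i, (ω i).IsHomogeneous m)
    (hx : x ∈ Ideal.span (Set.range ω)) (hxd : x.IsHomogeneous d) (hmd : m ≤ d) :
    ∃ c : ι → MvPolynomial σ R, (∀ i, (c i).IsHomogeneous (d - m)) ∧ ∑ i, c i * ω i = x := by
  obtain ⟨c, rfl⟩ := (Submodule.mem_span_range_iff_exists_fun _).1 hx
  refine ⟨fun i => homogeneousComponent (d - m) (c i),
    fun i => homogeneousComponent_isHomogeneous _ _, ?_⟩
  simp only [smul_eq_mul] at hxd ⊢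
  rw [← homogeneousComponent_eq_self hxd, map_sum]
  simp only [homogeneousComponent_mul_of_isHomogeneous_of_le (hω _) hmd]

theorem eq_zero_of_mem_span_of_isHomogeneous_of_lt (hω : ∀ i, (ω i).IsHomogeneous m)
    (hx : x ∈ Ideal.span (Set.range ω)) (hxd : x.IsHomogeneous d) (hdm : d < m) : x = 0 := by
  obtain ⟨c, rfl⟩ := (Submodule.mem_span_range_iff_exists_fun _).1 hx
  rw [← homogeneousComponent_eq_self hxd, map_sum]
  exact Finset.sum_eq_zero fun i _ => homogeneousComponent_mul_of_isHomogeneous_of_lt (hω i) hdm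

end Homogeneous

section Unfoldings

variable {n : ℕ} {ω : Fin (n+1) → PolyS n} {e a : ℕ}

theorem isHomogeneous_dcoeff (hω : ∀ i, (ω i).IsHomogeneous (e - 1)) (i j : Fin (n+1)) :
    (dcoeff ω i j).IsHomogeneous (e - 2) :=
  ((hω j).pderiv.sub (hω i).pderiv : (dcoeff ω i j).IsHomogeneous (e - 1 - 1))

theorem Integrable.sum_mul_mul_dcoeff (hint : Integrable ω) (X : Fin (n+1) → PolyS n)
    (i j : Fin (n+1)) :
    (∑ k, X k * ω k) * dcoeff ω i j =
      ω i * ∑ k, X k * dcoeff ω k j - ω j * ∑ k, X k * dcoeff ω k i := by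
  rw [Finset.sum_mul, Finset.mul_sum, Finset.mul_sum, ← Finset.sum_sub_distrib]
  exact Finset.sum_congr rfl fun k _ => by linear_combination X k * hint k i j

variable (ω e a) in
def vectorFieldPair (X : Fin (n+1) → PolyS n) : PolyS n × (Fin (n+1) → PolyS n) :=
  (∑ i, X i * ω i, fun j => (e : ℂ)⁻¹ • ((a : PolyS n) * (∑ i, X i * dcoeff ω i j) +
    (e : PolyS n) * pderiv j (∑ i, X i * ω i)))

theorem vectorFieldPair_mem_Vsub (he : 2 ≤ e) (hω : ∀ i, (ω i).IsHomogeneous (e - 1))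
    (hint : Integrable ω) (hea : e ≤ a + 1) {X : Fin (n+1) → PolyS n}
    (hX : ∀ i, (X i).IsHomogeneous (a + 1 - e)) :
    vectorFieldPair ω e a X ∈ Vsub ω e a := by
  have hh : (∑ i, X i * ω i).IsHomogeneous a :=
    .sum _ _ _ fun i _ => (by omega : a + 1 - e + (e - 1) = a) ▸ (hX i).mul (hω i)
  have hcontr : ∀ j, (∑ i, X i * dcoeff ω i j).IsHomogeneous (a - 1) := fun j =>
    .sum _ _ _ fun i _ => (by omega : a + 1 - e + (e - 2) = a - 1) ▸
      (hX i).mul (isHomogeneous_dcoeff hω i j)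
  have he' : (e : PolyS n) * C (e : ℂ)⁻¹ = 1 := by
    rw [← map_natCast C, ← map_mul, mul_inv_cancel₀ (by exact_mod_cast (by omega : e ≠ 0)),
      map_one]
  refine ⟨hh, fun j => ?_, fun i j => ?_⟩
  · simp only [vectorFieldPair, smul_eq_C_mul, ← map_natCast C]
    exact (((hcontr j).C_mul _).add (hh.pderiv.C_mul _)).C_mul _
  · simp only [vectorFieldPair, smul_eq_C_mul]
    linear_combination (a : PolyS n) * hint.sum_mul_mul_dcoeff X i j -
      ω i * ((a : PolyS n) * ∑ k, X k * dcoeff ω k j + e * pderiv j (∑ k, X k * ω k)) * he' +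
      ω j * ((a : PolyS n) * ∑ k, X k * dcoeff ω k i + e * pderiv i (∑ k, X k * ω k)) * he'

theorem map_fst_Vsub_inf_Csub (he : 2 ≤ e) (hω : ∀ i, (ω i).IsHomogeneous (e - 1))
    (hint : Integrable ω) :
    (Vsub ω e a ⊓ Csub ω e a).map (LinearMap.fst ℂ _ _) = homogComp (Jideal ω) a := by
  apply le_antisymm
  · rintro _ ⟨p, ⟨⟨hp, -, -⟩, X, -, rfl⟩, rfl⟩
    exact ⟨(Ideal.sum_mem _ fun i _ => Ideal.mul_mem_left _ _ (Ideal.subset_span ⟨i, rfl⟩) :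
      ∑ i, X i * ω i ∈ Jideal ω), hp⟩
  · rintro x ⟨hxJ, hxa⟩
    by_cases hea : e ≤ a + 1
    · obtain ⟨X, hX, rfl⟩ :=
        exists_sum_mul_eq_of_mem_span_of_isHomogeneous hω hxJ hxa (by omega)
      rw [show a - (e - 1) = a + 1 - e by omega] at hX
      exact ⟨vectorFieldPair ω e a X,
        ⟨vectorFieldPair_mem_Vsub he hω hint hea hX, X, .inl ⟨hea, hX⟩, rfl⟩, rfl⟩
    · rw [eq_zero_of_mem_span_of_isHomogeneous_of_lt hω hxJ hxa (by omega)]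
      exact zero_mem _

end Unfoldings

theorem exists_quotientEquiv_of_map_eq {R M Q : Type*} [Ring R] [AddCommGroup M] [Module R M]
    [AddCommGroup Q] [Module R Q] {I J : Submodule R M} (f : Q ≃ₗ[R] I) {N : Submodule R Q}
    (h : (N.map f.toLinearMap).map I.subtype = J) :
    ∃ g : (Q ⧸ N) ≃ₗ[R] (I ⧸ J.comap I.subtype),
      ∀ q, g (Submodule.Quotient.mk q) = Submodule.Quotient.mk (f q) :=
  ⟨Submodule.Quotient.equiv N _ f
    (by rw [← h, Submodule.comap_map_eq_of_injective I.injective_subtype]), fun _ => rfl⟩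

theorem stmt9_general (n e a : ℕ) (ω : Fin (n+1) → PolyS n) (hfol : IsFoliation n e ω)
    (f : (↥(Vsub ω e a) ⧸ (Wsub ω e a).comap (Vsub ω e a).subtype) ≃ₗ[ℂ]
      ↥(homogComp (Iideal ω) a))
    (hf : ∀ v : ↥(Vsub ω e a),
      (f (Submodule.Quotient.mk v) : PolyS n) = (v : PolyS n × (Fin (n+1) → PolyS n)).1) :
    Submodule.map ((homogComp (Iideal ω) a).subtype ∘ₗ (f.toLinearMap ∘ₗ
        Submodule.mkQ ((Wsub ω e a).comap (Vsub ω e a).subtype)))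
      ((Csub ω e a).comap (Vsub ω e a).subtype) = homogComp (Jideal ω) a ∧
    ∃ g : ((↥(Vsub ω e a) ⧸ (Wsub ω e a).comap (Vsub ω e a).subtype) ⧸
        (Submodule.map (Submodule.mkQ ((Wsub ω e a).comap (Vsub ω e a).subtype))
          ((Csub ω e a).comap (Vsub ω e a).subtype))) ≃ₗ[ℂ]
        (↥(homogComp (Iideal ω) a) ⧸
          (homogComp (Jideal ω) a).comap (homogComp (Iideal ω) a).subtype),
      ∀ v : ↥(Vsub ω e a),
        g (Submodule.Quotient.mk (Submodule.Quotient.mk v)) =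
          Submodule.Quotient.mk (f (Submodule.Quotient.mk v)) := by
  obtain ⟨-, he, hω, hint, -, -⟩ := hfol
  have hL : (homogComp (Iideal ω) a).subtype ∘ₗ (f.toLinearMap ∘ₗ
      Submodule.mkQ ((Wsub ω e a).comap (Vsub ω e a).subtype)) =
      LinearMap.fst ℂ _ _ ∘ₗ (Vsub ω e a).subtype := LinearMap.ext hf
  have himage : ((Csub ω e a).comap (Vsub ω e a).subtype).map
      (LinearMap.fst ℂ _ _ ∘ₗ (Vsub ω e a).subtype) = homogComp (Jideal ω) a := by
    rw [Submodule.map_comp, Submodule.map_comap_subtype, map_fst_Vsub_inf_Csub he hω hint]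
  refine ⟨hL ▸ himage, (exists_quotientEquiv_of_map_eq f ?_).imp fun g hg v => hg _⟩
  rw [← himage, ← hL, Submodule.map_comp, Submodule.map_comp]

/-- Let `ω ∈ ℱ¹(ℙⁿ,e)` and `a ≥ 1`. Under any isomorphism
`f : V_a/W_a ≅ I(ω)_a` induced by `(h,η) ↦ h`, the image of `C_a` (mod `W_a`) is exactly
`J(ω)_a`; consequently there is an induced `ℂ`-linear isomorphism
`(V_a/W_a)/C_a ≅ (I(ω)/J(ω))_a`. -/
theorem stmt9 (n e a : ℕ) (ω : Fin (n+1) → PolyS n) (hfol : IsFoliation n e ω)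
    (ha : 1 ≤ a)
    (f : (↥(Vsub ω e a) ⧸ (Wsub ω e a).comap (Vsub ω e a).subtype) ≃ₗ[ℂ]
      ↥(homogComp (Iideal ω) a))
    (hf : ∀ v : ↥(Vsub ω e a),
      (f (Submodule.Quotient.mk v) : PolyS n) = (v : PolyS n × (Fin (n+1) → PolyS n)).1) :
    Submodule.map ((homogComp (Iideal ω) a).subtype ∘ₗ (f.toLinearMap ∘ₗ
        Submodule.mkQ ((Wsub ω e a).comap (Vsub ω e a).subtype)))
      ((Csub ω e a).comap (Vsub ω e a).subtype) = homogComp (Jideal ω) a ∧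
    ∃ g : ((↥(Vsub ω e a) ⧸ (Wsub ω e a).comap (Vsub ω e a).subtype) ⧸
        (Submodule.map (Submodule.mkQ ((Wsub ω e a).comap (Vsub ω e a).subtype))
          ((Csub ω e a).comap (Vsub ω e a).subtype))) ≃ₗ[ℂ]
        (↥(homogComp (Iideal ω) a) ⧸
          (homogComp (Jideal ω) a).comap (homogComp (Iideal ω) a).subtype),
      ∀ v : ↥(Vsub ω e a),
        g (Submodule.Quotient.mk (Submodule.Quotient.mk v)) =
          Submodule.Quotient.mk (f (Submodule.Quotient.mk v)) :=
  stmt9_general n e a ω hfol f hf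

end
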